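/- For the covariant Pauli channel with parameters p0, p1, p3 ≥ 0, p0 + 2p1 + p3 = 1, the partial transpose (I⊗T)𝒥_Λ of its Choi matrix is positive semidefinite if and only if p0 ≤ 1/2 and p3 ≤ 1/2. -/

import Mathlib

/-! `choiPT` is diagonalised by the basis `e₀, e₁ - e₂, e₁ + e₂, e₃`, with eigenvalues `p₀ + p₃`
(twice) and `2p₁ ∓ (p₀ - p₃)`; under `p₀ + 2p₁ + p₃ = 1` the latter two are `1 - 2p₀` and
`1 - 2p₃`. -/

open Matrix
open scoped ComplexOrder

noncomputable section

/-- The partial transpose of the Choi matrix of the covariant Pauli channel. -/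
def choiPT (p0 p1 p3 : ℝ) : Matrix (Fin 4) (Fin 4) ℂ :=
  !![((p0 + p3 : ℝ) : ℂ), 0, 0, 0;
     0, ((2 * p1 : ℝ) : ℂ), ((p0 - p3 : ℝ) : ℂ), 0;
     0, ((p0 - p3 : ℝ) : ℂ), ((2 * p1 : ℝ) : ℂ), 0;
     0, 0, 0, ((p0 + p3 : ℝ) : ℂ)]

def choiPTEigenbasis : Matrix (Fin 4) (Fin 4) ℂ :=
  !![1, 0, 0, 0;
     0, 1, 1, 0;
     0, -1, 1, 0;
     0, 0, 0, 1]

lemma isUnit_choiPTEigenbasis : IsUnit choiPTEigenbasis := by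
  rw [isUnit_iff_isUnit_det]
  simp [choiPTEigenbasis, det_succ_row_zero, Fin.sum_univ_succ]

/-- The eigenvalues are halved because the columns of `choiPTEigenbasis` have squared norm `2`. -/
lemma choiPT_eq_conj (p0 p1 p3 : ℝ) :
    choiPT p0 p1 p3 = choiPTEigenbasis *
      diagonal (fun i ↦ ((![p0 + p3, p1 - (p0 - p3) / 2, p1 + (p0 - p3) / 2, p0 + p3] i : ℝ) : ℂ))
      * star choiPTEigenbasis := by
  ext i j
  simp only [mul_apply, Fin.sum_univ_four, diagonal_apply, star_apply]
  fin_cases i <;> fin_cases j <;> simp [choiPT, choiPTEigenbasis] <;> ring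

theorem choiPT_posSemidef_iff_general (p0 p1 p3 : ℝ) (h0 : 0 ≤ p0) (h3 : 0 ≤ p3)
    (hsum : p0 + 2 * p1 + p3 = 1) :
    (choiPT p0 p1 p3).PosSemidef ↔ p0 ≤ 1 / 2 ∧ p3 ≤ 1 / 2 := by
  rw [choiPT_eq_conj, isUnit_choiPTEigenbasis.posSemidef_star_right_conjugate_iff,
    posSemidef_diagonal_iff]
  have hdiag : 0 ≤ p0 + p3 := add_nonneg h0 h3
  simp only [Fin.forall_fin_succ, Fin.isValue, cons_val_zero, cons_val_succ, cons_val_fin_one,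
    Complex.zero_le_real, hdiag, sub_nonneg, implies_true, and_true, true_and]
  constructor <;> rintro ⟨_, _⟩ <;> constructor <;> linarith

/-- The partial transpose of the Choi matrix of the covariant Pauli channel is positive
semidefinite if and only if `p₀ ≤ 1/2` and `p₃ ≤ 1/2`. -/
theorem choiPT_posSemidef_iff (p0 p1 p3 : ℝ) (h0 : 0 ≤ p0) (h1 : 0 ≤ p1) (h3 : 0 ≤ p3)
    (hsum : p0 + 2 * p1 + p3 = 1) :
    (choiPT p0 p1 p3).PosSemidef ↔ p0 ≤ 1 / 2 ∧ p3 ≤ 1 / 2 :=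
  choiPT_posSemidef_iff_general p0 p1 p3 h0 h3 hsum

end
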